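/- For all multisets Γ, Δ of ML_P formulas and every LL formula A: if t(Γ) ⊢_LL ?t(Δ), A is derivable in linear logic (where ?t(Δ) means each formula of t(Δ) is prefixed by ?), then t(Γ) ⊢_LL ?t(Δ), !A is derivable in linear logic. -/

import Mathlib

/-- Formulas of ML_P: `F ::= 0 | ⊥ | X | F∧F | F∨F | F→F` with variables from `V`. -/
inductive Fml (V : Type) : Type where
  | zero : Fml V
  | bot : Fml V
  | var : V → Fml V
  | and : Fml V → Fml V → Fml V
  | or : Fml V → Fml V → Fml V
  | imp : Fml V → Fml V → Fml V

/-- Formulas of propositional linear logic with `⊗`, `⊕`, `⊸`, `!`, `?` and `0`. -/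
inductive LLF (V : Type) : Type where
  | zero : LLF V
  | var : V → LLF V
  | tensor : LLF V → LLF V → LLF V
  | oplus : LLF V → LLF V → LLF V
  | limp : LLF V → LLF V → LLF V
  | bang : LLF V → LLF V
  | quest : LLF V → LLF V

/-- Two-sided sequent calculus for linear logic (on the fragment `⊗, ⊕, ⊸, !, ?, 0`):
axiom, cut, the `⊗`, `⊕`, `⊸` and `0` rules, dereliction, promotion, weakening and
contraction for the exponentials (exchange is built in via multisets). -/
inductive LL {V : Type} : Multiset (LLF V) → Multiset (LLF V) → Prop where
  | ax (A : LLF V) : LL {A} {A}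
  | cut {Γ Γ' Δ Δ' : Multiset (LLF V)} {A : LLF V} :
      LL Γ (Δ + {A}) → LL (Γ' + {A}) Δ' → LL (Γ + Γ') (Δ + Δ')
  | zeroL {Γ Δ : Multiset (LLF V)} : LL (Γ + {LLF.zero}) Δ
  | tensorL {Γ Δ : Multiset (LLF V)} {A B : LLF V} :
      LL (Γ + {A, B}) Δ → LL (Γ + {LLF.tensor A B}) Δ
  | tensorR {Γ Γ' Δ Δ' : Multiset (LLF V)} {A B : LLF V} :
      LL Γ (Δ + {A}) → LL Γ' (Δ' + {B}) → LL (Γ + Γ') (Δ + Δ' + {LLF.tensor A B})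
  | oplusL {Γ Δ : Multiset (LLF V)} {A B : LLF V} :
      LL (Γ + {A}) Δ → LL (Γ + {B}) Δ → LL (Γ + {LLF.oplus A B}) Δ
  | oplusR1 {Γ Δ : Multiset (LLF V)} {A B : LLF V} :
      LL Γ (Δ + {A}) → LL Γ (Δ + {LLF.oplus A B})
  | oplusR2 {Γ Δ : Multiset (LLF V)} {A B : LLF V} :
      LL Γ (Δ + {B}) → LL Γ (Δ + {LLF.oplus A B})
  | limpL {Γ Γ' Δ Δ' : Multiset (LLF V)} {A B : LLF V} :
      LL Γ (Δ + {A}) → LL (Γ' + {B}) Δ' → LL (Γ + Γ' + {LLF.limp A B}) (Δ + Δ')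
  | limpR {Γ Δ : Multiset (LLF V)} {A B : LLF V} :
      LL (Γ + {A}) (Δ + {B}) → LL Γ (Δ + {LLF.limp A B})
  | derL {Γ Δ : Multiset (LLF V)} {A : LLF V} :
      LL (Γ + {A}) Δ → LL (Γ + {LLF.bang A}) Δ
  | derR {Γ Δ : Multiset (LLF V)} {A : LLF V} :
      LL Γ (Δ + {A}) → LL Γ (Δ + {LLF.quest A})
  | promL {Γ Δ : Multiset (LLF V)} {A : LLF V} :
      LL (Γ.map LLF.bang + {A}) (Δ.map LLF.quest) →
      LL (Γ.map LLF.bang + {LLF.quest A}) (Δ.map LLF.quest)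
  | promR {Γ Δ : Multiset (LLF V)} {A : LLF V} :
      LL (Γ.map LLF.bang) (Δ.map LLF.quest + {A}) →
      LL (Γ.map LLF.bang) (Δ.map LLF.quest + {LLF.bang A})
  | weakL {Γ Δ : Multiset (LLF V)} {A : LLF V} :
      LL Γ Δ → LL (Γ + {LLF.bang A}) Δ
  | weakR {Γ Δ : Multiset (LLF V)} {A : LLF V} :
      LL Γ Δ → LL Γ (Δ + {LLF.quest A})
  | contrL {Γ Δ : Multiset (LLF V)} {A : LLF V} :
      LL (Γ + {LLF.bang A, LLF.bang A}) Δ → LL (Γ + {LLF.bang A}) Δ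
  | contrR {Γ Δ : Multiset (LLF V)} {A : LLF V} :
      LL Γ (Δ + {LLF.quest A, LLF.quest A}) → LL Γ (Δ + {LLF.quest A})

open Classical in
/-- The translation `t` from ML_P formulas to LL formulas:
`t(0) = t(⊥) = 0`, `t(X) = !X`, `t(A∧B) = !b(A) ⊗ !b(B)`, `t(A∨B) = !b(A) ⊕ !b(B)`,
`t(A→B) = !(t(A) ⊸ b(B))`, where `b(A) = ?t(A)` if `A ∈ P` and `b(A) = t(A)` otherwise. -/
noncomputable def tr {V : Type} (P : Set (Fml V)) : Fml V → LLF V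
  | Fml.zero => LLF.zero
  | Fml.bot => LLF.zero
  | Fml.var x => LLF.bang (LLF.var x)
  | Fml.and A B =>
      LLF.tensor (LLF.bang (if A ∈ P then LLF.quest (tr P A) else tr P A))
        (LLF.bang (if B ∈ P then LLF.quest (tr P B) else tr P B))
  | Fml.or A B =>
      LLF.oplus (LLF.bang (if A ∈ P then LLF.quest (tr P A) else tr P A))
        (LLF.bang (if B ∈ P then LLF.quest (tr P B) else tr P B))
  | Fml.imp A B =>
      LLF.bang (LLF.limp (tr P A) (if B ∈ P then LLF.quest (tr P B) else tr P B))

open Classical in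
/-- The translation `b` : `b(A) = ?t(A)` if `A ∈ P`, and `b(A) = t(A)` otherwise. -/
noncomputable def br {V : Type} (P : Set (Fml V)) (A : Fml V) : LLF V :=
  if A ∈ P then LLF.quest (tr P A) else tr P A

/-!
Every translated formula `t(C)` satisfies `t(C) ⊢ !t(C)`: it is `0`, a `!`-formula, or a `⊗`/`⊕`
of `!`-formulas. Hence in `t(Γ) ⊢ ?t(Δ), A` the context `t(Γ)` may be traded for `!t(Γ)` (by
dereliction), the `!`-promotion rule applies, and `!t(Γ)` is traded back for `t(Γ)` by cut.
-/

namespace LL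

variable {V : Type}

theorem cut_left {Γ Δ : Multiset (LLF V)} {A B : LLF V} (hAB : LL {A} {B})
    (h : LL (Γ + {B}) Δ) : LL (Γ + {A}) Δ := by
  simpa [add_comm] using cut (Δ := 0) (by simpa using hAB) h

theorem bang_elim (A : LLF V) : LL {A.bang} {A} := by
  simpa using derL (Γ := 0) (by simpa using ax A)

theorem promR_single {Γ : Multiset (LLF V)} {A : LLF V} (h : LL (Γ.map LLF.bang) {A}) :
    LL (Γ.map LLF.bang) {A.bang} := by
  simpa using promR (Δ := 0) (by simpa using h)

theorem cut_map_left {α : Type*} {f g : α → LLF V} {s : Multiset α}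
    (hgf : ∀ a ∈ s, LL {g a} {f a}) {S Δ : Multiset (LLF V)} (h : LL (s.map f + S) Δ) :
    LL (s.map g + S) Δ := by
  induction s using Multiset.induction generalizing S with
  | empty => simpa using h
  | cons a s ih =>
    have hcons (φ : α → LLF V) (T : Multiset (LLF V)) :
        (a ::ₘ s).map φ + T = s.map φ + (T + {φ a}) := by
      rw [Multiset.map_cons, Multiset.cons_add, ← add_assoc, add_comm _ {φ a},
        Multiset.singleton_add]
    rw [hcons] at h ⊢
    refine ih (fun b hb => hgf b (Multiset.mem_cons_of_mem hb)) ?_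
    rw [← add_assoc] at h ⊢
    exact cut_left (hgf a (Multiset.mem_cons_self a s)) h

end LL

namespace LLF

variable {V : Type}

def Promotable (A : LLF V) : Prop := LL {A} {A.bang}

theorem Promotable.zero : (LLF.zero : LLF V).Promotable := by
  simpa [Promotable] using LL.zeroL (Γ := 0) (Δ := {LLF.zero.bang})

theorem Promotable.bang (A : LLF V) : A.bang.Promotable := by
  simpa [Promotable] using LL.promR_single (Γ := {A}) (by simpa using LL.ax A.bang)

theorem Promotable.tensor_bang (A B : LLF V) : (A.bang.tensor B.bang).Promotable := by
  have h : LL (({A, B} : Multiset (LLF V)).map LLF.bang) {A.bang.tensor B.bang} := by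
    simpa using LL.tensorR (Γ := {A.bang}) (Γ' := {B.bang}) (Δ := 0) (Δ' := 0)
      (by simpa using LL.ax _) (by simpa using LL.ax _)
  simpa [Promotable] using LL.tensorL (Γ := 0) (by simpa using LL.promR_single h)

theorem Promotable.oplus_bang (A B : LLF V) : (A.bang.oplus B.bang).Promotable := by
  have hA : LL (({A} : Multiset (LLF V)).map LLF.bang) {A.bang.oplus B.bang} := by
    simpa using LL.oplusR1 (Γ := {A.bang}) (Δ := 0) (by simpa using LL.ax _)
  have hB : LL (({B} : Multiset (LLF V)).map LLF.bang) {A.bang.oplus B.bang} := by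
    simpa using LL.oplusR2 (Γ := {B.bang}) (Δ := 0) (by simpa using LL.ax _)
  simpa [Promotable] using LL.oplusL (Γ := 0) (by simpa using LL.promR_single hA)
    (by simpa using LL.promR_single hB)

end LLF

theorem LL.promR_of_promotable {V : Type} {Γ Δ : Multiset (LLF V)} {A : LLF V}
    (hΓ : ∀ B ∈ Γ, B.Promotable) (h : LL Γ (Δ.map LLF.quest + {A})) :
    LL Γ (Δ.map LLF.quest + {A.bang}) := by
  have h' : LL (Γ.map LLF.bang) (Δ.map LLF.quest + {A}) := by
    simpa using cut_map_left (f := id) (S := 0) (fun B _ => bang_elim B) (by simpa using h)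
  simpa using cut_map_left (g := id) (S := 0) hΓ (by simpa using promR h')

theorem promotable_tr {V : Type} (P : Set (Fml V)) : ∀ C : Fml V, (tr P C).Promotable
  | .zero | .bot => LLF.Promotable.zero
  | .var _ | .imp _ _ => LLF.Promotable.bang _
  | .and _ _ => LLF.Promotable.tensor_bang _ _
  | .or _ _ => LLF.Promotable.oplus_bang _ _

/-- If `t(Γ) ⊢_LL ?t(Δ), A`, then `t(Γ) ⊢_LL ?t(Δ), !A`. -/
theorem bang_right {V : Type} (P : Set (Fml V)) (Γ Δ : Multiset (Fml V)) (A : LLF V)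
    (h : LL (Γ.map (tr P)) ((Δ.map (tr P)).map LLF.quest + {A})) :
    LL (Γ.map (tr P)) ((Δ.map (tr P)).map LLF.quest + {LLF.bang A}) :=
  LL.promR_of_promotable (by simpa using fun C _ => promotable_tr P C) h
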